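/- arXiv:1812.09130 — 3 statements merged into one kernel-verified Lean document; each statement's English description precedes it below -/
import Mathlib

section
/- The cyclic algebra (L|K, σ, a) is isomorphic as a K-algebra to the matrix algebra M_n(K) if and only if a is a norm of the extension L/K, i.e., a ∈ N_{L/K}(L×). -/
/-- A presentation of the `K`-algebra `A` as the cyclic algebra `(L|K, σ, a)`:
`A = ⊕_{i=0}^{n-1} L·uⁱ` with `uⁿ = a·1` and `u⁻¹lu = σ(l)` for `l ∈ L`,
where `n = [L : K]`. -/
structure CyclicAlgebraPresentation (K L : Type*) [Field K] [Field L] [Algebra K L]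
    (σ : L ≃ₐ[K] L) (a : K) (A : Type*) [Ring A] [Algebra K A] where
  /-- the embedding of `L` into `A` -/
  ι : L →ₐ[K] A
  /-- the distinguished element `u` -/
  u : A
  /-- a two-sided inverse of `u` -/
  uInv : A
  u_mul_uInv : u * uInv = 1
  uInv_mul_u : uInv * u = 1
  u_pow : u ^ (Module.finrank K L) = algebraMap K A a
  conj : ∀ l : L, uInv * ι l * u = ι (σ l)
  directSum : ∀ x : A, ∃! c : Fin (Module.finrank K L) → L,
    x = ∑ i, ι (c i) * u ^ (i : ℕ)

/-!
Conjugation by `u` acts on `ι(L)` as `σ⁻¹`, so in any representation of `A` the operator of `u`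
is `σ⁻¹`-semilinear. If `A ≅ M_n(K) = End_K(Kⁿ)`, then `Kⁿ` is a one-dimensional `L`-vector
space via `ι`, `u` maps a generator `v` to `m • v`, and `uⁿ = a` forces
`a = m · σ⁻¹(m) ⋯ σ⁻⁽ⁿ⁻¹⁾(m) = N(m)`. Conversely, if `a = N(l)`, then `u ↦ (x ↦ l · σ⁻¹(x))`
extends to a `K`-algebra map `A → End_K(L)`, injective by Dedekind's independence of the
characters `σ⁻ⁱ` and hence bijective, both sides having dimension `n²`.
-/

open Module Finset

theorem bijective_pow_of_orderOf_eq {G : Type*} [LeftCancelMonoid G] [Fintype G] {x : G} {n : ℕ}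
    (hx : orderOf x = n) (hG : Fintype.card G = n) :
    Function.Bijective fun i : Fin n ↦ x ^ (i : ℕ) := by
  refine (Fintype.bijective_iff_injective_and_card _).mpr ⟨fun i j hij ↦ ?_, by simp [hG]⟩
  subst hx
  exact Fin.ext (pow_injOn_Iio_orderOf i.isLt j.isLt hij)

section Galois

variable {K L : Type*} [Field K] [Field L] [Algebra K L] [FiniteDimensional K L] [IsGalois K L]

theorem AlgEquiv.orderOf_eq_finrank_of_forall_eq_pow {σ : L ≃ₐ[K] L}
    (hσ : ∀ τ : L ≃ₐ[K] L, ∃ i : ℕ, τ = σ ^ i) : orderOf σ = finrank K L := by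
  rw [orderOf_eq_card_of_forall_mem_zpowers fun τ ↦ ?_, IsGalois.card_aut_eq_finrank]
  obtain ⟨i, rfl⟩ := hσ τ
  exact ⟨i, zpow_natCast σ i⟩

theorem AlgEquiv.bijective_pow_of_orderOf_eq_finrank {τ : L ≃ₐ[K] L}
    (hτ : orderOf τ = finrank K L) :
    Function.Bijective fun i : Fin (finrank K L) ↦ τ ^ (i : ℕ) :=
  bijective_pow_of_orderOf_eq hτ <| by
    rw [← Nat.card_eq_fintype_card, IsGalois.card_aut_eq_finrank]

theorem prod_range_pow_apply_eq_algebraMap_norm {τ : L ≃ₐ[K] L}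
    (hτ : orderOf τ = finrank K L) (x : L) :
    ∏ i ∈ range (finrank K L), (τ ^ i) x = algebraMap K L (Algebra.norm K x) := by
  rw [Algebra.norm_eq_prod_automorphisms, prod_range]
  exact Fintype.prod_bijective _ (AlgEquiv.bijective_pow_of_orderOf_eq_finrank hτ) _ _
    fun _ ↦ rfl

end Galois

/-- `c ↦ ∑ i, f (c i) * t ^ i`: the evaluation at `t` of the skew polynomial with
coefficients `c`. -/
def skewEval {K L B : Type*} [CommRing K] [Semiring L] [Algebra K L] [Semiring B] [Algebra K B]
    {m : ℕ} (f : L →ₐ[K] B) (t : B) : (Fin m → L) →ₗ[K] B :=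
  ∑ i : Fin m, LinearMap.mulRight K (t ^ (i : ℕ)) ∘ₗ f.toLinearMap ∘ₗ LinearMap.proj i

section SkewEval

variable {K L B : Type*} [CommRing K] [Semiring L] [Algebra K L] [Semiring B] [Algebra K B]
  {m : ℕ} (f : L →ₐ[K] B) (t : B)

theorem skewEval_apply (c : Fin m → L) : skewEval f t c = ∑ i, f (c i) * t ^ (i : ℕ) := by
  simp [skewEval]

theorem skewEval_single (i : Fin m) (x : L) :
    skewEval f t (Pi.single i x) = f x * t ^ (i : ℕ) := by
  rw [skewEval_apply, sum_eq_single i (fun j _ hj ↦ by simp [hj]) (by simp)]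
  simp

theorem pow_mul_eq_of_forall_mul_eq {τ : L ≃ₐ[K] L} (h : ∀ c, t * f c = f (τ c) * t) (i : ℕ)
    (c : L) : t ^ i * f c = f ((τ ^ i) c) * t ^ i := by
  induction i with
  | zero => simp
  | succ i ih =>
    rw [pow_succ', mul_assoc, ih, ← mul_assoc, h, pow_succ', AlgEquiv.mul_apply, mul_assoc]

theorem mul_pow_mul_mul_pow {τ : L ≃ₐ[K] L} (h : ∀ c, t * f c = f (τ c) * t) (c d : L) (i j : ℕ) :
    f c * t ^ i * (f d * t ^ j) = f (c * (τ ^ i) d) * t ^ (i + j) := by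
  rw [mul_assoc, ← mul_assoc (t ^ i), pow_mul_eq_of_forall_mul_eq f t h, map_mul, pow_add]
  simp only [mul_assoc]

end SkewEval

section TwistMul

variable {K L : Type*} [Field K] [Field L] [Algebra K L]

def twistMul (τ : L ≃ₐ[K] L) (l : L) : Module.End K L := Algebra.lmul K L l * τ.toLinearMap

variable (τ : L ≃ₐ[K] L) (l : L)

theorem twistMul_apply (x : L) : twistMul τ l x = l * τ x := rfl

theorem twistMul_pow_apply (i : ℕ) (x : L) :
    (twistMul τ l ^ i) x = (∏ j ∈ range i, (τ ^ j) l) * (τ ^ i) x := by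
  induction i generalizing x with
  | zero => simp
  | succ i ih =>
    rw [pow_succ, Module.End.mul_apply, twistMul_apply, ih, prod_range_succ, map_mul, pow_succ,
      AlgEquiv.mul_apply]
    ring

theorem twistMul_mul_lmul (c : L) :
    twistMul τ l * Algebra.lmul K L c = Algebra.lmul K L (τ c) * twistMul τ l := by
  ext x
  simp only [Module.End.mul_apply, twistMul_apply, Algebra.coe_lmul_eq_mul, LinearMap.mul_apply',
    map_mul]
  ring

variable [FiniteDimensional K L] [IsGalois K L] {τ}

theorem twistMul_pow_finrank (hτ : orderOf τ = finrank K L) :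
    twistMul τ l ^ finrank K L = algebraMap K (Module.End K L) (Algebra.norm K l) := by
  ext x
  rw [twistMul_pow_apply, prod_range_pow_apply_eq_algebraMap_norm hτ, ← hτ, pow_orderOf_eq_one,
    AlgEquiv.one_apply, Module.algebraMap_end_apply, Algebra.smul_def]

theorem injective_skewEval_twistMul (hτ : orderOf τ = finrank K L) {l : L} (hl : l ≠ 0) :
    Function.Injective (skewEval (m := finrank K L) (Algebra.lmul K L) (twistMul τ l)) := by
  rw [← LinearMap.ker_eq_bot, LinearMap.ker_eq_bot']
  intro c hc
  have hindep : LinearIndependent L fun i : Fin (finrank K L) ↦ ⇑(τ ^ (i : ℕ)) :=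
    (linearIndependent_monoidHom L L).comp
      (fun i : Fin (finrank K L) ↦ ((τ ^ (i : ℕ) : L ≃ₐ[K] L) : L →* L))
      fun i j hij ↦ (AlgEquiv.bijective_pow_of_orderOf_eq_finrank hτ).injective
        (AlgEquiv.ext fun x ↦ DFunLike.congr_fun hij x)
  have hsum : ∑ i, (c i * ∏ j ∈ range i, (τ ^ j) l) • ⇑(τ ^ (i : ℕ)) = 0 := by
    ext x
    simpa [skewEval_apply, twistMul_pow_apply, mul_assoc] using LinearMap.congr_fun hc x
  ext i
  have hprod : ∏ j ∈ range i, (τ ^ j) l ≠ 0 :=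
    prod_ne_zero_iff.mpr fun j _ ↦ (map_ne_zero (τ ^ j)).mpr hl
  exact (mul_eq_zero.mp (Fintype.linearIndependent_iff.mp hindep _ hsum i)).resolve_right hprod

end TwistMul

section Semilinear

variable {K L V : Type*} [Field K] [Field L] [Algebra K L] [FiniteDimensional K L] [IsGalois K L]
  [AddCommGroup V] [Module K V]

theorem exists_ne_zero_norm_eq_of_semilinear_pow_eq {τ : L ≃ₐ[K] L}
    (hτ : orderOf τ = finrank K L) (hV : finrank K V = finrank K L)
    (ρ : L →ₐ[K] Module.End K V) (U : Module.End K V) (hU : IsUnit U)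
    (hUρ : ∀ c, U * ρ c = ρ (τ c) * U) {a : K}
    (hUa : U ^ finrank K L = algebraMap K (Module.End K V) a) :
    ∃ l : L, l ≠ 0 ∧ Algebra.norm K l = a := by
  let : Module L V := Module.compHom V ρ.toRingHom
  have hsmul : ∀ (c : L) (v : V), c • v = ρ c v := fun _ _ ↦ rfl
  have : IsScalarTower K L V := ⟨fun k c v ↦ by simp only [hsmul, map_smul, LinearMap.smul_apply]⟩
  have hpos : 0 < finrank K L := finrank_pos
  have : FiniteDimensional K V := Module.finite_of_finrank_pos (hV ▸ hpos)
  have : FiniteDimensional L V := FiniteDimensional.right K L V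
  have hrank : finrank L V = 1 := by
    have := finrank_mul_finrank K L V
    rw [hV] at this
    exact (Nat.mul_eq_left hpos.ne').mp this
  have : Nontrivial V := Module.nontrivial_of_finrank_pos (hV ▸ hpos)
  obtain ⟨v, hv⟩ := exists_ne (0 : V)
  obtain ⟨m, hm⟩ := (finrank_eq_one_iff_of_nonzero' v hv).mp hrank (U v)
  have hU_pow : ∀ k : ℕ, (U ^ k) v = (∏ i ∈ range k, (τ ^ i) m) • v := by
    intro k
    induction k with
    | zero => simp
    | succ k ih =>
      rw [pow_succ', Module.End.mul_apply, ih, hsmul, ← Module.End.mul_apply, hUρ,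
        Module.End.mul_apply, ← hm, ← hsmul, smul_smul, prod_range_succ', pow_zero,
        AlgEquiv.one_apply, map_prod]
      simp only [pow_succ', AlgEquiv.mul_apply]
  refine ⟨m, fun hm0 ↦ hv ?_, (algebraMap K L).injective ?_⟩
  · exact ((Module.End.isUnit_iff U).mp hU).injective
      (by rw [← hm, hm0, zero_smul, map_zero])
  · have := hU_pow (finrank K L)
    rw [hUa, Module.algebraMap_end_apply, prod_range_pow_apply_eq_algebraMap_norm hτ,
      ← algebraMap_smul L a v] at this
    exact (smul_left_injective L hv this).symm

end Semilinear

namespace CyclicAlgebraPresentation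

variable {K L : Type*} [Field K] [Field L] [Algebra K L] {σ : L ≃ₐ[K] L} {a : K}
  {A : Type*} [Ring A] [Algebra K A] (P : CyclicAlgebraPresentation K L σ a A)

theorem u_mul_ι (c : L) : P.u * P.ι c = P.ι (σ⁻¹ c) * P.u := by
  calc P.u * P.ι c = P.u * (P.uInv * P.ι (σ⁻¹ c) * P.u) := by
        rw [P.conj, AlgEquiv.aut_inv, AlgEquiv.apply_symm_apply]
    _ = P.ι (σ⁻¹ c) * P.u := by rw [← mul_assoc, ← mul_assoc, P.u_mul_uInv, one_mul]

theorem isUnit_u : IsUnit P.u := ⟨⟨P.u, P.uInv, P.u_mul_uInv, P.uInv_mul_u⟩, rfl⟩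

noncomputable def coeffEquiv : (Fin (finrank K L) → L) ≃ₗ[K] A :=
  LinearEquiv.ofBijective (skewEval P.ι P.u) <| by
    refine ⟨fun c₁ c₂ h ↦ ?_, fun x ↦ ?_⟩
    · obtain ⟨c, -, huniq⟩ := P.directSum (skewEval P.ι P.u c₁)
      rw [huniq c₁ (skewEval_apply _ _ c₁), huniq c₂ (h.trans (skewEval_apply _ _ c₂))]
    · obtain ⟨c, hc, -⟩ := P.directSum x
      exact ⟨c, (skewEval_apply _ _ _).trans hc.symm⟩

theorem coeffEquiv_apply (c : Fin (finrank K L) → L) :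
    P.coeffEquiv c = skewEval P.ι P.u c := rfl

theorem finrank_eq (P : CyclicAlgebraPresentation K L σ a A) [FiniteDimensional K L] :
    finrank K A = finrank K L * finrank K L := by
  rw [← P.coeffEquiv.finrank_eq, Module.finrank_pi_fintype, sum_const, card_univ,
    Fintype.card_fin, smul_eq_mul]

section Lift

variable [FiniteDimensional K L] {B : Type*} [Ring B] [Algebra K B] (f : L →ₐ[K] B) (t : B)

noncomputable def liftLinear : A →ₗ[K] B := skewEval f t ∘ₗ P.coeffEquiv.symm.toLinearMap

variable {f t}

theorem liftLinear_ι_mul_u_pow (ht : t ^ finrank K L = algebraMap K B a) (m : L) (k : ℕ) :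
    P.liftLinear f t (P.ι m * P.u ^ k) = f m * t ^ k := by
  induction k using Nat.strong_induction_on generalizing m with
  | _ k ih =>
    rcases lt_or_ge k (finrank K L) with hk | hk
    · rw [liftLinear, LinearMap.comp_apply, LinearEquiv.coe_toLinearMap,
        ← skewEval_single P.ι P.u ⟨k, hk⟩ m, ← coeffEquiv_apply, LinearEquiv.symm_apply_apply,
        skewEval_single]
    · obtain ⟨j, rfl⟩ := Nat.exists_eq_add_of_le hk
      have hj : j < finrank K L + j := Nat.lt_add_of_pos_left finrank_pos
      have hreduce :
          P.ι m * P.u ^ (finrank K L + j) = P.ι (algebraMap K L a * m) * P.u ^ j := by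
        rw [pow_add, P.u_pow, map_mul, P.ι.commutes, ← mul_assoc, Algebra.commutes]
      rw [hreduce, ih j hj, map_mul, f.commutes, pow_add, ht, ← mul_assoc, Algebra.commutes]

theorem liftLinear_mul (ht : t ^ finrank K L = algebraMap K B a)
    (htf : ∀ c, t * f c = f (σ⁻¹ c) * t) (x y : A) :
    P.liftLinear f t (x * y) = P.liftLinear f t x * P.liftLinear f t y := by
  obtain ⟨c, rfl⟩ := P.coeffEquiv.surjective x
  obtain ⟨d, rfl⟩ := P.coeffEquiv.surjective y
  simp only [coeffEquiv_apply, skewEval_apply, sum_mul_sum, map_sum]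
  refine sum_congr rfl fun i _ ↦ sum_congr rfl fun j _ ↦ ?_
  rw [mul_pow_mul_mul_pow _ _ P.u_mul_ι, liftLinear_ι_mul_u_pow _ ht, liftLinear_ι_mul_u_pow _ ht,
    liftLinear_ι_mul_u_pow _ ht, mul_pow_mul_mul_pow _ _ htf]

noncomputable def lift (ht : t ^ finrank K L = algebraMap K B a)
    (htf : ∀ c, t * f c = f (σ⁻¹ c) * t) : A →ₐ[K] B :=
  AlgHom.ofLinearMap (P.liftLinear f t) (by simpa using P.liftLinear_ι_mul_u_pow ht 1 0)
    (P.liftLinear_mul ht htf)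

theorem lift_coeffEquiv (ht : t ^ finrank K L = algebraMap K B a)
    (htf : ∀ c, t * f c = f (σ⁻¹ c) * t) (c : Fin (finrank K L) → L) :
    P.lift ht htf (P.coeffEquiv c) = skewEval f t c := by
  simp [lift, liftLinear]

end Lift

section Galois

variable [FiniteDimensional K L] [IsGalois K L]

theorem exists_norm_eq_of_algHom_end (P : CyclicAlgebraPresentation K L σ a A)
    (hσ : orderOf σ = finrank K L) {V : Type*} [AddCommGroup V]
    [Module K V] (hV : finrank K V = finrank K L) (g : A →ₐ[K] Module.End K V) :
    ∃ l : L, l ≠ 0 ∧ Algebra.norm K l = a :=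
  exists_ne_zero_norm_eq_of_semilinear_pow_eq (τ := σ⁻¹) (by rwa [orderOf_inv]) hV (g.comp P.ι)
    (g P.u) (P.isUnit_u.map g) (fun c ↦ by simp only [AlgHom.comp_apply, ← map_mul, u_mul_ι])
    (by rw [← map_pow, P.u_pow, g.commutes])

theorem nonempty_algEquiv_end_of_norm_eq (P : CyclicAlgebraPresentation K L σ a A)
    (hσ : orderOf σ = finrank K L) {l : L} (hl : l ≠ 0)
    (hla : Algebra.norm K l = a) : Nonempty (A ≃ₐ[K] Module.End K L) := by
  have hσ' : orderOf σ⁻¹ = finrank K L := by rwa [orderOf_inv]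
  have hT : twistMul σ⁻¹ l ^ finrank K L = algebraMap K (Module.End K L) a :=
    hla ▸ twistMul_pow_finrank l hσ'
  let Φ := P.lift hT (twistMul_mul_lmul σ⁻¹ l)
  have hinj : Function.Injective Φ := by
    intro x y hxy
    obtain ⟨c, rfl⟩ := P.coeffEquiv.surjective x
    obtain ⟨d, rfl⟩ := P.coeffEquiv.surjective y
    rw [lift_coeffEquiv, lift_coeffEquiv] at hxy
    rw [injective_skewEval_twistMul hσ' hl hxy]
  have : FiniteDimensional K A := Module.Finite.equiv P.coeffEquiv
  have hsurj : Function.Surjective Φ :=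
    (LinearMap.injective_iff_surjective_of_finrank_eq_finrank (f := Φ.toLinearMap)
      (by rw [P.finrank_eq, Module.finrank_linearMap])).mp hinj
  exact ⟨AlgEquiv.ofBijective Φ ⟨hinj, hsurj⟩⟩

end Galois

end CyclicAlgebraPresentation

theorem cyclicAlgebra_iso_matrix_iff_isNorm_general
    (K L : Type*) [Field K] [Field L] [Algebra K L] {n : ℕ}
    [IsGalois K L] [FiniteDimensional K L]
    (hn : Module.finrank K L = n)
    (σ : L ≃ₐ[K] L) (hσ : ∀ τ : L ≃ₐ[K] L, ∃ i : ℕ, τ = σ ^ i)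
    (a : K)
    (A : Type*) [Ring A] [Algebra K A]
    (P : CyclicAlgebraPresentation K L σ a A) :
    Nonempty (A ≃ₐ[K] Matrix (Fin n) (Fin n) K) ↔
      ∃ l : L, l ≠ 0 ∧ Algebra.norm K l = a := by
  subst hn
  have hσ_order := AlgEquiv.orderOf_eq_finrank_of_forall_eq_pow hσ
  constructor
  · rintro ⟨e⟩
    exact P.exists_norm_eq_of_algHom_end hσ_order (finrank_fin_fun K)
      (e.trans algEquivMatrix'.symm).toAlgHom
  · rintro ⟨l, hl, hla⟩
    obtain ⟨e⟩ := P.nonempty_algEquiv_end_of_norm_eq hσ_order hl hla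
    exact ⟨e.trans (algEquivMatrix (finBasis K L))⟩

/-- The cyclic algebra `(L|K, σ, a)` is isomorphic as a `K`-algebra to `M_n(K)` if and
only if `a` is a norm of the extension `L/K`. -/
theorem cyclicAlgebra_iso_matrix_iff_isNorm
    (K L : Type*) [Field K] [Field L] [Algebra K L] {n : ℕ}
    [IsGalois K L] [FiniteDimensional K L]
    (hn : Module.finrank K L = n)
    (σ : L ≃ₐ[K] L) (hσ : ∀ τ : L ≃ₐ[K] L, ∃ i : ℕ, τ = σ ^ i)
    (a : K) (ha : a ≠ 0)
    (A : Type*) [Ring A] [Algebra K A]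
    (P : CyclicAlgebraPresentation K L σ a A) :
    Nonempty (A ≃ₐ[K] Matrix (Fin n) (Fin n) K) ↔
      ∃ l : L, l ≠ 0 ∧ Algebra.norm K l = a :=
  cyclicAlgebra_iso_matrix_iff_isNorm_general K L hn σ hσ a A P
end

section
/- If a ∈ A is an element of a finite-dimensional central simple algebra of dimension n² over ℚ, then the minimal polynomial of a over ℚ has degree at most n. -/
/-!
Over `K = AlgebraicClosure ℚ` the algebra `K ⊗[ℚ] A` is still simple, because `A` is central
simple; by Wedderburn–Artin it is then a matrix algebra `Mₘ(K)`, and comparing dimensions gives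
`m = n`. The minimal polynomial of `a` does not change under this base change, since the powers of
`a` stay linearly independent, and the minimal polynomial of an `m × m` matrix divides its
characteristic polynomial, of degree `m`.

Simplicity of `K ⊗[ℚ] A` is the classical minimal-length argument: write elements as `∑ bᵢ ⊗ aᵢ`
over a basis `(bᵢ)` of `K`, and take a nonzero element of an ideal with fewest nonzero
coefficients. Simplicity of `A` lets one make one coefficient equal to `1`; commutators with
`1 ⊗ u` are shorter, hence zero, so all coefficients are central, i.e. scalars, and the element
is `c ⊗ 1` for a unit `c`.
-/

open Polynomial TensorProduct

theorem minpoly.one_tmul {k K A : Type*} [Field k] [CommRing K] [Nontrivial K] [Algebra k K]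
    [Ring A] [Algebra k A] {a : A} (ha : IsIntegral k a) :
    minpoly K ((1 : K) ⊗ₜ[k] a) = (minpoly k a).map (algebraMap k K) := by
  refine minpoly.eq_of_linearIndependent _ _ ((minpoly.monic ha).map _) ?_ _
    (degree_map_eq_of_injective (algebraMap k K).injective _ ▸
      degree_eq_natDegree (minpoly.ne_zero ha)) ?_
  · rw [aeval_map_algebraMap, ← Algebra.TensorProduct.includeRight_apply, aeval_algHom_apply,
      minpoly.aeval, map_zero]
  · simpa [Algebra.TensorProduct.tmul_pow] using
      Module.Flat.linearIndependent_one_tmul (S := K) (linearIndependent_pow (K := k) a)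

theorem Matrix.natDegree_minpoly_le {K n : Type*} [Field K] [Fintype n] [DecidableEq n]
    (M : Matrix n n K) : (minpoly K M).natDegree ≤ Fintype.card n :=
  M.charpoly_natDegree_eq_dim ▸
    natDegree_le_of_dvd M.minpoly_dvd_charpoly M.charpoly_monic.ne_zero

namespace TensorProduct

section Coefficients

variable {k K A ι : Type*} [CommRing k] [Ring K] [Algebra k K] [Ring A] [Algebra k A]
  [DecidableEq ι] (ℬ : Module.Basis ι k K)

theorem equivFinsuppOfBasisLeft_one_tmul_mul (u : A) (x : K ⊗[k] A) (i : ι) :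
    equivFinsuppOfBasisLeft ℬ ((1 : K) ⊗ₜ[k] u * x) i = u * equivFinsuppOfBasisLeft ℬ x i := by
  induction x using TensorProduct.induction_on with
  | zero => simp
  | tmul c a => simp [Algebra.TensorProduct.tmul_mul_tmul]
  | add x y hx hy => simp [mul_add, hx, hy]

theorem equivFinsuppOfBasisLeft_mul_one_tmul (u : A) (x : K ⊗[k] A) (i : ι) :
    equivFinsuppOfBasisLeft ℬ (x * (1 : K) ⊗ₜ[k] u) i = equivFinsuppOfBasisLeft ℬ x i * u := by
  induction x using TensorProduct.induction_on with
  | zero => simp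
  | tmul c a => simp [Algebra.TensorProduct.tmul_mul_tmul]
  | add x y hx hy => simp [add_mul, hx, hy]

theorem exists_eq_tmul_one_of_forall_mem_bot (x : K ⊗[k] A)
    (hx : ∀ i, equivFinsuppOfBasisLeft ℬ x i ∈ (⊥ : Subalgebra k A)) :
    ∃ c : K, x = c ⊗ₜ[k] (1 : A) := by
  choose q hq using fun i => Algebra.mem_bot.mp (hx i)
  refine ⟨(equivFinsuppOfBasisLeft ℬ x).sum fun i _ => q i • ℬ i, ?_⟩
  conv_lhs => rw [← (equivFinsuppOfBasisLeft ℬ).symm_apply_apply x,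
    equivFinsuppOfBasisLeft_symm_apply]
  simp only [Finsupp.sum, sum_tmul, ← hq, Algebra.algebraMap_eq_smul_one, smul_tmul]

def coeffIdeal (I : TwoSidedIdeal (K ⊗[k] A)) (s : Finset ι) (j : ι) : TwoSidedIdeal A :=
  .mk' {c | ∃ w ∈ I, (∀ i ∉ s, equivFinsuppOfBasisLeft ℬ w i = 0) ∧
      equivFinsuppOfBasisLeft ℬ w j = c}
    ⟨0, I.zero_mem, by simp, by simp⟩
    (by
      rintro _ _ ⟨w, hw, hws, rfl⟩ ⟨w', hw', hws', rfl⟩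
      exact ⟨w + w', I.add_mem hw hw', fun i hi => by simp [hws i hi, hws' i hi], by simp⟩)
    (by
      rintro _ ⟨w, hw, hws, rfl⟩
      exact ⟨-w, I.neg_mem hw, fun i hi => by simp [hws i hi], by simp⟩)
    (by
      rintro u _ ⟨w, hw, hws, rfl⟩
      exact ⟨(1 : K) ⊗ₜ[k] u * w, I.mul_mem_left _ _ hw,
        fun i hi => by simp [equivFinsuppOfBasisLeft_one_tmul_mul, hws i hi],
        equivFinsuppOfBasisLeft_one_tmul_mul ℬ u w j⟩)
    (by
      rintro _ u ⟨w, hw, hws, rfl⟩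
      exact ⟨w * (1 : K) ⊗ₜ[k] u, I.mul_mem_right _ _ hw,
        fun i hi => by simp [equivFinsuppOfBasisLeft_mul_one_tmul, hws i hi],
        equivFinsuppOfBasisLeft_mul_one_tmul ℬ u w j⟩)

theorem mem_coeffIdeal {I : TwoSidedIdeal (K ⊗[k] A)} {s : Finset ι} {j : ι} {c : A} :
    c ∈ coeffIdeal ℬ I s j ↔ ∃ w ∈ I, (∀ i ∉ s, equivFinsuppOfBasisLeft ℬ w i = 0) ∧
      equivFinsuppOfBasisLeft ℬ w j = c :=
  TwoSidedIdeal.mem_mk' ..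

theorem equivFinsuppOfBasisLeft_mem_bot_of_minimal [Algebra.IsCentral k A]
    {I : TwoSidedIdeal (K ⊗[k] A)} {w : K ⊗[k] A} (hwI : w ∈ I) {j : ι}
    (hwj : equivFinsuppOfBasisLeft ℬ w j = 1)
    (hmin : ∀ z ∈ I, (equivFinsuppOfBasisLeft ℬ z).support ⊂
      (equivFinsuppOfBasisLeft ℬ w).support → z = 0) (i : ι) :
    equivFinsuppOfBasisLeft ℬ w i ∈ (⊥ : Subalgebra k A) := by
  nontriviality A
  rw [← Algebra.IsCentral.center_eq_bot, Subalgebra.mem_center_iff]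
  intro u
  set z := (1 : K) ⊗ₜ[k] u * w - w * (1 : K) ⊗ₜ[k] u
  have hz : ∀ i, equivFinsuppOfBasisLeft ℬ z i =
      u * equivFinsuppOfBasisLeft ℬ w i - equivFinsuppOfBasisLeft ℬ w i * u := fun i => by
    simp [z, equivFinsuppOfBasisLeft_one_tmul_mul, equivFinsuppOfBasisLeft_mul_one_tmul]
  have hzI : z ∈ I := I.sub_mem (I.mul_mem_left _ _ hwI) (I.mul_mem_right _ _ hwI)
  have hj : j ∈ (equivFinsuppOfBasisLeft ℬ w).support := by simp [hwj]
  have hz0 : z = 0 := hmin z hzI ⟨fun i hi => by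
    by_contra hiw
    simp [hz, Finsupp.notMem_support_iff.mp hiw] at hi,
    fun h => by simpa [hz, hwj] using h hj⟩
  simpa [hz, sub_eq_zero] using congr(equivFinsuppOfBasisLeft ℬ $hz0 i)

end Coefficients

theorem isSimpleRing_of_isCentral {k : Type*} [Field k] (K : Type*) [DivisionRing K]
    [Algebra k K] {A : Type*} [Ring A] [Algebra k A] [Algebra.IsCentral k A] [IsSimpleRing A] :
    IsSimpleRing (K ⊗[k] A) := by
  classical
  let ℬ := Module.Basis.ofVectorSpace k K
  refine .of_eq_bot_or_eq_top fun I => or_iff_not_imp_left.mpr fun hI => ?_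
  obtain ⟨x, hxI, hx0⟩ : ∃ x ∈ I, x ≠ 0 := by
    by_contra! h
    exact hI (eq_bot_iff.mpr fun x hx => (TwoSidedIdeal.mem_bot _).mpr (h x hx))
  obtain ⟨y, ⟨hyI, hy0⟩, hmin⟩ :=
    (measure fun y => (equivFinsuppOfBasisLeft ℬ y).support.card).wf.has_min
      {y | y ∈ I ∧ y ≠ 0} ⟨x, hxI, hx0⟩
  obtain ⟨j, hj⟩ :=
    Finsupp.support_nonempty_iff.mpr ((equivFinsuppOfBasisLeft ℬ).map_ne_zero_iff.mpr hy0)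
  obtain ⟨w, hwI, hws, hwj⟩ := (mem_coeffIdeal ℬ).mp <|
    IsSimpleRing.one_mem_of_ne_zero_mem (coeffIdeal ℬ I (equivFinsuppOfBasisLeft ℬ y).support j)
      (Finsupp.mem_support_iff.mp hj)
      ((mem_coeffIdeal ℬ).mpr ⟨y, hyI, fun i hi => Finsupp.notMem_support_iff.mp hi, rfl⟩)
  have hwy : (equivFinsuppOfBasisLeft ℬ w).support ⊆ (equivFinsuppOfBasisLeft ℬ y).support :=
    fun i hi => by_contra fun hiy => Finsupp.mem_support_iff.mp hi (hws i hiy)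
  obtain ⟨c, rfl⟩ := exists_eq_tmul_one_of_forall_mem_bot ℬ w <|
    equivFinsuppOfBasisLeft_mem_bot_of_minimal ℬ hwI hwj fun z hzI hzw =>
      by_contra fun hz0 => hmin z ⟨hzI, hz0⟩ (Finset.card_lt_card (hzw.trans_subset hwy))
  have hc : c ≠ 0 := by rintro rfl; simp at hwj
  refine I.one_mem_iff.mp ?_
  simpa [Algebra.TensorProduct.tmul_mul_tmul, hc, ← Algebra.TensorProduct.one_def] using
    I.mul_mem_left (c⁻¹ ⊗ₜ[k] 1) _ hwI

end TensorProduct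

/-- If `a` is an element of a finite-dimensional central simple algebra of dimension `n²`
over `ℚ`, then the minimal polynomial of `a` over `ℚ` has degree at most `n`. -/
theorem minpoly_natDegree_le_of_centralSimple
    (A : Type*) [Ring A] [Algebra ℚ A] [FiniteDimensional ℚ A]
    [Algebra.IsCentral ℚ A] [IsSimpleRing A] (n : ℕ)
    (hdim : Module.finrank ℚ A = n ^ 2) (a : A) :
    (minpoly ℚ a).natDegree ≤ n := by
  let K := AlgebraicClosure ℚ
  have : IsSimpleRing (K ⊗[ℚ] A) := TensorProduct.isSimpleRing_of_isCentral K
  obtain ⟨m, -, ⟨e⟩⟩ := IsSimpleRing.exists_algEquiv_matrix_of_isAlgClosed K (K ⊗[ℚ] A)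
  have hm : m ^ 2 = n ^ 2 := by
    simpa [Module.finrank_baseChange, Module.finrank_matrix, hdim, sq] using
      e.toLinearEquiv.finrank_eq.symm
  calc (minpoly ℚ a).natDegree = (minpoly K ((1 : K) ⊗ₜ[ℚ] a)).natDegree := by
        rw [minpoly.one_tmul (.of_finite ℚ a), natDegree_map]
    _ = (minpoly K (e (1 ⊗ₜ a))).natDegree := by rw [minpoly.algEquiv_eq]
    _ ≤ m := by simpa using (e (1 ⊗ₜ a)).natDegree_minpoly_le
    _ = n := Nat.pow_left_injective two_ne_zero hm
end

section
/- Let D₁ and D₂ be finite-dimensional central division algebras over a field K of coprime degrees d₁ and d₂ (so dim_K D_i = d_i²). Then D₁ ⊗_K D₂ is a central division algebra over K of degree d₁·d₂. -/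
/-!
A left ideal `I` of `A = D₁ ⊗ D₂` is a left vector space over both `D₁ ⊗ 1` and `1 ⊗ D₂`, so
`dim_K I` is divisible by `d₁²` and by `d₂²`, hence by `d₁² d₂² = dim_K A`. Thus every nonzero left
ideal is all of `A`, i.e. `A` is simple as a left module over itself, which makes it a division ring.
For the center: the centralizer of `D₁ ⊗ 1` is `Z(D₁) ⊗ D₂ = 1 ⊗ D₂`, and the elements of `1 ⊗ D₂`
that commute with `1 ⊗ D₂` lie in `1 ⊗ Z(D₂) = K`.
-/

open scoped TensorProduct
open Module Algebra.TensorProduct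

theorem Algebra.TensorProduct.range_map_bot_le_range_includeRight (K A B : Type*) [CommSemiring K]
    [Semiring A] [Algebra K A] [Semiring B] [Algebra K B] :
    (map (⊥ : Subalgebra K A).val (AlgHom.id K B)).range ≤
      (includeRight : B →ₐ[K] A ⊗[K] B).range := by
  rintro _ ⟨u, rfl⟩
  induction u using TensorProduct.induction_on with
  | zero => exact zero_mem _
  | tmul a b =>
    obtain ⟨k, hk⟩ := a.2
    exact ⟨k • b, by simp [← hk, Algebra.algebraMap_eq_smul_one, TensorProduct.smul_tmul]⟩
  | add u v hu hv => rw [map_add]; exact add_mem hu hv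

theorem Algebra.IsCentral.tensorProduct (K A B : Type*) [Field K] [Ring A] [Algebra K A]
    [Nontrivial A] [Ring B] [Algebra K B] [Algebra.IsCentral K A] [Algebra.IsCentral K B] :
    Algebra.IsCentral K (A ⊗[K] B) where
  out z hz := by
    have hzA := Subalgebra.center_le_centralizer K
      ((includeLeft : A →ₐ[K] A ⊗[K] B).range : Set (A ⊗[K] B)) hz
    rw [Subalgebra.centralizer_coe_range_includeLeft_eq_center_tensorProduct,
      Algebra.IsCentral.center_eq_bot] at hzA
    obtain ⟨w, rfl⟩ := (AlgHom.mem_range _).1 (range_map_bot_le_range_includeRight K A B hzA)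
    have hinj := includeRight_injective (A := A) (B := B) (algebraMap K A).injective
    have hw : w ∈ Subalgebra.center K B := Subalgebra.mem_center_iff.2 fun b =>
      hinj <| by simpa only [map_mul] using Subalgebra.mem_center_iff.1 hz (includeRight b)
    obtain ⟨k, rfl⟩ := Algebra.IsCentral.out hw
    exact ⟨k, by simp⟩

theorem AlgHom.finrank_dvd_finrank_ideal {K B A : Type*} [Field K] [DivisionRing B] [Algebra K B]
    [Ring A] [Algebra K A] (f : B →ₐ[K] A) (I : Ideal A) : finrank K B ∣ finrank K I := by
  let _ : Module B I := Module.compHom I f.toRingHom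
  have _ : IsScalarTower K B I := ⟨fun k b m => by
    ext; change f (k • b) * m = k • (f b * m); simp⟩
  exact Module.finrank_dvd_finrank_right K B I

theorem isSimpleModule_self_of_coprime_finrank {K A B C : Type*} [Field K] [Ring A] [Algebra K A]
    [Nontrivial A] [FiniteDimensional K A] [DivisionRing B] [Algebra K B] [DivisionRing C]
    [Algebra K C] (f : B →ₐ[K] A) (g : C →ₐ[K] A) (hcop : (finrank K B).Coprime (finrank K C))
    (hA : finrank K A ≤ finrank K B * finrank K C) : IsSimpleModule A A where
  eq_bot_or_eq_top I := or_iff_not_imp_left.2 fun hI => by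
    have hdvd : finrank K B * finrank K C ∣ finrank K I := hcop.mul_dvd_of_dvd_of_dvd
      (f.finrank_dvd_finrank_ideal I) (g.finrank_dvd_finrank_ideal I)
    have hpos : 0 < finrank K (I.restrictScalars K) :=
      Nat.pos_of_ne_zero <| Submodule.finrank_eq_zero.not.2 <|
        (Submodule.restrictScalars_eq_bot_iff K A A).not.2 hI
    have hI_finrank : finrank K (I.restrictScalars K) = finrank K A :=
      (Submodule.finrank_le _).antisymm (hA.trans (Nat.le_of_dvd hpos hdvd))
    exact (Submodule.restrictScalars_eq_top_iff K A A).1 (Submodule.eq_top_of_finrank_eq hI_finrank)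

/-- The tensor product of two finite-dimensional central division algebras over `K` of
coprime degrees `d₁`, `d₂` is a central division algebra over `K` of degree `d₁·d₂`. -/
theorem tensorProduct_divisionAlgebra_of_coprime_degrees
    (K D₁ D₂ : Type*) [Field K]
    [DivisionRing D₁] [Algebra K D₁] [FiniteDimensional K D₁] [Algebra.IsCentral K D₁]
    [DivisionRing D₂] [Algebra K D₂] [FiniteDimensional K D₂] [Algebra.IsCentral K D₂]
    (d₁ d₂ : ℕ)
    (h₁ : Module.finrank K D₁ = d₁ ^ 2) (h₂ : Module.finrank K D₂ = d₂ ^ 2)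
    (hcop : Nat.Coprime d₁ d₂) :
    (∀ x : D₁ ⊗[K] D₂, x ≠ 0 → IsUnit x) ∧
      Algebra.IsCentral K (D₁ ⊗[K] D₂) ∧
      Module.finrank K (D₁ ⊗[K] D₂) = (d₁ * d₂) ^ 2 := by
  have hdim : finrank K (D₁ ⊗[K] D₂) = finrank K D₁ * finrank K D₂ := finrank_tensorProduct
  have : IsSimpleModule (D₁ ⊗[K] D₂) (D₁ ⊗[K] D₂) :=
    isSimpleModule_self_of_coprime_finrank includeLeft includeRight
      (by rw [h₁, h₂]; exact hcop.pow 2 2) hdim.le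
  exact ⟨(isSimpleModule_self_iff_isUnit.1 this).2, .tensorProduct K D₁ D₂,
    by rw [hdim, h₁, h₂, mul_pow]⟩
end
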